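/- arXiv:1408.1288 — 4 statements merged into one kernel-verified Lean document; each statement's English description precedes it below -/
import Mathlib

section
/- For natural numbers n and r with 1 ≤ r ≤ n−1, (n−1) · (binom(n−1, r−1) − binom(n−r−1, r−1)) ≤ r·(r−1) · binom(n−1, r−1). -/
open Finset Filter Real Asymptotics

noncomputable section

open Classical in
/-- Probability of the event `E` under the product Bernoulli(`p`) measure on `ι → Bool`
(each coordinate `true`, i.e. "retained", independently with probability `p`). -/
def bprob {ι : Type*} [Fintype ι] (p : ℝ) (E : Set (ι → Bool)) : ℝ :=
  ∑ ω : ι → Bool, if ω ∈ E then ∏ e : ι, (if ω e then p else 1 - p) else 0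

open Classical in
/-- Expectation of `X` under the product Bernoulli(`p`) measure on `ι → Bool`. -/
def bexpect {ι : Type*} [Fintype ι] (p : ℝ) (X : (ι → Bool) → ℝ) : ℝ :=
  ∑ ω : ι → Bool, (∏ e : ι, (if ω e then p else 1 - p)) * X ω

/-- The threshold function `p_c(n,r) = ((r+1) log n - r log r) / C(n-1, r-1)`. -/
def pc (n r : ℕ) : ℝ :=
  (((r : ℝ) + 1) * Real.log n - (r : ℝ) * Real.log r) / ((n - 1).choose (r - 1))

/-- `A` is a family of `r`-element subsets of `[n]`. -/
def isRFamily (n r : ℕ) (A : Finset (Finset (Fin n))) : Prop :=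
  ∀ S ∈ A, S.card = r

/-- `A` induces an independent set in the random subgraph of the Kneser graph determined by
the edge sample `ω` (`ω e = true` meaning the edge `e` was retained): no retained edge, i.e.
pair of disjoint sets, has both endpoints in `A`. -/
def inducesIndep (n : ℕ) (ω : Sym2 (Finset (Fin n)) → Bool)
    (A : Finset (Finset (Fin n))) : Prop :=
  ∀ S ∈ A, ∀ T ∈ A, S ≠ T → Disjoint S T → ω s(S, T) = false

open Classical in
/-- The independence number of the random subgraph `K_p(n,r)` determined by the
edge sample `ω`: the largest size of a family of `r`-sets inducing an independent set. -/
def kneserAlpha (n r : ℕ) (ω : Sym2 (Finset (Fin n)) → Bool) : ℕ :=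
  Finset.sup
    (Finset.univ.filter fun A : Finset (Finset (Fin n)) =>
      isRFamily n r A ∧ inducesIndep n ω A)
    Finset.card

/-- The star centred at `x`: all `r`-element subsets of `[n]` containing `x`. -/
def kstar (n r : ℕ) (x : Fin n) : Finset (Finset (Fin n)) :=
  Finset.univ.filter fun S => S.card = r ∧ x ∈ S

/-- `A_x`: the subfamily of members of `A` containing `x`. -/
def subAt (n : ℕ) (A : Finset (Finset (Fin n))) (x : Fin n) : Finset (Finset (Fin n)) :=
  A.filter fun S => x ∈ S

/-- The maximum degree `d(A) = max_x |A_x|`. -/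
def maxDeg (n : ℕ) (A : Finset (Finset (Fin n))) : ℕ :=
  Finset.univ.sup fun x : Fin n => (subAt n A x).card

open Classical in
/-- `e(A)`: the number of unordered pairs `{S, T} ⊆ A` with `S ∩ T = ∅`, i.e. the number of
edges of the Kneser graph induced by `A`. -/
def eCount (n : ℕ) (A : Finset (Finset (Fin n))) : ℕ :=
  (A.sym2.filter fun e => ¬ e.IsDiag ∧ ∀ S ∈ e, ∀ T ∈ e, S ≠ T → Disjoint S T).card

open Classical in
/-- `Y`: the number of families of `r`-sets of size `C(n-1,r-1) + 1` with maximum degree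
`C(n-1,r-1)` (i.e. containing a full star) inducing an independent set in the sample `ω`. -/
def Ycount (n r : ℕ) (ω : Sym2 (Finset (Fin n)) → Bool) : ℕ :=
  (Finset.univ.filter fun A : Finset (Finset (Fin n)) =>
    isRFamily n r A ∧ A.card = (n - 1).choose (r - 1) + 1 ∧
      maxDeg n A = (n - 1).choose (r - 1) ∧ inducesIndep n ω A).card

open Classical in
/-- `X_i`: the number of families of `r`-sets of size `C(n-1,r-1)` with maximum degree
`C(n-1,r-1) - i` inducing an independent set in the sample `ω`. -/
def Xcount (n r i : ℕ) (ω : Sym2 (Finset (Fin n)) → Bool) : ℕ :=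
  (Finset.univ.filter fun A : Finset (Finset (Fin n)) =>
    isRFamily n r A ∧ A.card = (n - 1).choose (r - 1) ∧
      maxDeg n A = (n - 1).choose (r - 1) - i ∧ inducesIndep n ω A).card

/-- Counts the `(k+1)`-subsets of `[m]` meeting a fixed `t`-set: pick a common element first,
then `k` more among the other `m - 1`. -/
theorem Nat.choose_sub_choose_sub_le (t m k : ℕ) :
    m.choose (k + 1) - (m - t).choose (k + 1) ≤ t * (m - 1).choose k := by
  induction t generalizing m with
  | zero => simp
  | succ t ih =>
    rcases m with _ | m
    · simp
    · have hmono : t * (m - 1).choose k ≤ t * m.choose k :=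
        Nat.mul_le_mul_left t (Nat.choose_le_choose k (Nat.sub_le m 1))
      have hprev := ih m
      rw [Nat.choose_succ_succ', Nat.add_sub_add_right, Nat.add_sub_cancel, Nat.succ_mul]
      omega

theorem choose_diff_le_general (n r : ℕ) :
    (n - 1) * ((n - 1).choose (r - 1) - (n - r - 1).choose (r - 1))
      ≤ r * (r - 1) * (n - 1).choose (r - 1) := by
  rcases Nat.lt_or_ge r 2 with hr | hr
  · interval_cases r <;> simp
  rcases Nat.lt_or_ge n 2 with hn | hn
  · simp [show n - 1 = 0 by omega]
  obtain ⟨s, rfl⟩ : ∃ s, r = s + 2 := ⟨r - 2, by omega⟩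
  obtain ⟨m, rfl⟩ : ∃ m, n = m + 2 := ⟨n - 2, by omega⟩
  have hdiff := Nat.choose_sub_choose_sub_le (s + 2) (m + 1) s
  simp only [Nat.add_sub_cancel, Nat.add_sub_add_right] at hdiff
  rw [show m + 2 - 1 = m + 1 by omega, show s + 2 - 1 = s + 1 by omega,
    show m + 2 - (s + 2) - 1 = m - (s + 1) by omega]
  calc (m + 1) * ((m + 1).choose (s + 1) - (m - (s + 1)).choose (s + 1))
      ≤ (m + 1) * ((s + 2) * m.choose s) := Nat.mul_le_mul_left _ hdiff
    _ = (s + 2) * ((m + 1) * m.choose s) := by ring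
    _ = (s + 2) * (s + 1) * (m + 1).choose (s + 1) := by
      rw [Nat.add_one_mul_choose_eq]; ring

/-- inequality from Proposition 7:
`(n-1) (C(n-1, r-1) - C(n-r-1, r-1)) ≤ r (r-1) C(n-1, r-1)`. -/
theorem choose_diff_le (n r : ℕ) (h1 : 1 ≤ r) (h2 : r ≤ n - 1) :
    (n - 1) * ((n - 1).choose (r - 1) - (n - r - 1).choose (r - 1))
      ≤ r * (r - 1) * (n - 1).choose (r - 1) :=
  choose_diff_le_general n r

end
end

section
/- Fix ε ∈ (0, 1/2), let r = r(n) be a sequence of natural numbers with 2 ≤ r(n) and r(n) = o(n^{1/2}), and let p = p(n) = (1+ε)·p_c(n, r(n)). Let Y_n be the number of families A ⊆ [n]^(r(n)) with |A| = binom(n−1,r(n)−1) + 1 and d(A) = binom(n−1,r(n)−1) that induce an independent set in K_{p(n)}(n, r(n)). Then E[Y_n] → 0 as n → ∞. -/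
/-!
A family counted by `Y` consists of a full star `S_x` together with one further `r`-set `B ∌ x`,
so there are at most `n·C(n,r)` such families, and each spans at least `C(n-r-1,r-1)` Kneser
edges, namely those joining `B` to the members of `S_x` that avoid `B`. Hence
`E[Y] ≤ n·C(n,r)·(1-p)^C(n-r-1,r-1) ≤ exp(N + r - p·C(n-r-1,r-1))` with
`N = (r+1) log n - r log r`, the numerator of `p_c`. As `r² = o(n)`, the ratio
`C(n-r-1,r-1) / C(n-1,r-1)` tends to `1`, so `p·C(n-r-1,r-1) ≥ (1+ε/2)·N`; and since
`N ≥ (r/2+1) log n`, the exponent is at most `-(ε/2) log n` once `ε log n ≥ 4`.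
-/

open Finset Filter Real Asymptotics

noncomputable section

section Bernoulli

variable {ι : Type*} [Fintype ι] {p : ℝ}

lemma sum_prod_apply_bool {R : Type*} [CommSemiring R] [DecidableEq ι] (f : ι → Bool → R) :
    ∑ ω : ι → Bool, ∏ e, f e (ω e) = ∏ e, (f e true + f e false) := by
  simp only [← Fintype.sum_bool, Fintype.prod_sum]

lemma bprob_forall_eq_false (S : Finset ι) :
    bprob p {ω : ι → Bool | ∀ e ∈ S, ω e = false} = (1 - p) ^ #S := by
  classical
  set f : ι → Bool → ℝ := fun e b => if b then (if e ∈ S then 0 else p) else 1 - p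
  calc bprob p {ω : ι → Bool | ∀ e ∈ S, ω e = false}
      = ∑ ω : ι → Bool, ∏ e, f e (ω e) := by
        refine Finset.sum_congr rfl fun ω _ => ?_
        split_ifs with h
        · exact Finset.prod_congr rfl fun e _ => by by_cases he : e ∈ S <;> simp_all [f]
        · simp only [Set.mem_ofPred_eq, not_forall, Bool.not_eq_false] at h
          obtain ⟨e, heS, hωe⟩ := h
          exact (Finset.prod_eq_zero (Finset.mem_univ e) (by simp [f, heS, hωe])).symm
    _ = ∏ e, (f e true + f e false) := sum_prod_apply_bool f
    _ = (1 - p) ^ #S := by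
        simp only [f, if_true, Bool.false_eq_true, if_false, ite_add, zero_add,
          add_sub_cancel]
        rw [Finset.prod_ite_mem, Finset.univ_inter, Finset.prod_const]

lemma bexpect_card_filter {κ : Type*} (s : Finset κ) (R : κ → (ι → Bool) → Prop)
    [∀ ω, DecidablePred (R · ω)] :
    bexpect p (fun ω => (#(s.filter (R · ω)) : ℝ)) = ∑ A ∈ s, bprob p {ω | R A ω} := by
  classical
  unfold bexpect bprob
  simp only [Finset.card_filter, Nat.cast_sum, Finset.mul_sum, Set.mem_ofPred_eq]
  rw [Finset.sum_comm]
  refine Finset.sum_congr rfl fun A _ => Finset.sum_congr rfl fun ω _ => ?_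
  split_ifs <;> simp

lemma bexpect_nonneg (hp0 : 0 ≤ p) (hp1 : p ≤ 1) {X : (ι → Bool) → ℝ}
    (hX : ∀ ω, 0 ≤ X ω) : 0 ≤ bexpect p X :=
  Finset.sum_nonneg fun ω _ => mul_nonneg
    (Finset.prod_nonneg fun e _ => by split_ifs <;> linarith) (hX ω)

end Bernoulli

section Kneser

variable {n : ℕ}

open Classical in
def kneserEdges (n : ℕ) (A : Finset (Finset (Fin n))) : Finset (Sym2 (Finset (Fin n))) :=
  A.sym2.filter fun e => ¬ e.IsDiag ∧ ∀ S ∈ e, ∀ T ∈ e, S ≠ T → Disjoint S T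

lemma eCount_eq_card_kneserEdges (A : Finset (Finset (Fin n))) :
    eCount n A = #(kneserEdges n A) := rfl

lemma mk_mem_kneserEdges {A : Finset (Finset (Fin n))} {S T : Finset (Fin n)} :
    s(S, T) ∈ kneserEdges n A ↔ S ∈ A ∧ T ∈ A ∧ S ≠ T ∧ Disjoint S T := by
  simp only [kneserEdges, Finset.mem_filter, Finset.mk_mem_sym2_iff, Sym2.mk_isDiag_iff,
    Sym2.mem_iff]
  constructor
  · rintro ⟨⟨hS, hT⟩, hne, hdisj⟩
    exact ⟨hS, hT, hne, hdisj S (Or.inl rfl) T (Or.inr rfl) hne⟩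
  · rintro ⟨hS, hT, hne, hdisj⟩
    refine ⟨⟨hS, hT⟩, hne, ?_⟩
    rintro S' (rfl | rfl) T' (rfl | rfl) hne'
    all_goals first | exact absurd rfl hne' | exact hdisj | exact hdisj.symm

lemma inducesIndep_iff_forall_kneserEdges {ω : Sym2 (Finset (Fin n)) → Bool}
    {A : Finset (Finset (Fin n))} :
    inducesIndep n ω A ↔ ∀ e ∈ kneserEdges n A, ω e = false := by
  refine ⟨fun h e he => ?_, fun h S hS T hT hne hdisj =>
    h _ (mk_mem_kneserEdges.2 ⟨hS, hT, hne, hdisj⟩)⟩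
  induction e with
  | _ S T =>
    obtain ⟨hS, hT, hne, hdisj⟩ := mk_mem_kneserEdges.1 he
    exact h S hS T hT hne hdisj

lemma bprob_inducesIndep (p : ℝ) (A : Finset (Finset (Fin n))) :
    bprob p {ω | inducesIndep n ω A} = (1 - p) ^ eCount n A := by
  simp_rw [inducesIndep_iff_forall_kneserEdges, eCount_eq_card_kneserEdges]
  exact bprob_forall_eq_false _

end Kneser

section Star

variable {n r : ℕ}

lemma mem_kstar {x : Fin n} {S : Finset (Fin n)} : S ∈ kstar n r x ↔ #S = r ∧ x ∈ S := by
  simp [kstar]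

lemma card_filter_disjoint_kstar (hr : 1 ≤ r) {x : Fin n} {B : Finset (Fin n)} (hxB : x ∉ B) :
    #((kstar n r x).filter (Disjoint B)) = (n - #B - 1).choose (r - 1) := by
  have hcard : #(Finset.univ \ insert x B) = n - #B - 1 := by
    rw [Finset.card_sdiff_of_subset (Finset.subset_univ _), Finset.card_insert_of_notMem hxB,
      Finset.card_univ, Fintype.card_fin, Nat.sub_sub]
  rw [← hcard, ← Finset.card_powersetCard]
  refine Finset.card_nbij' (fun S => S.erase x) (insert x) ?_ ?_ ?_ ?_
  · intro S hS
    simp only [Finset.coe_filter, mem_kstar, Finset.mem_coe, Finset.mem_powersetCard,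
      Finset.subset_iff, Finset.mem_sdiff, Finset.mem_insert, Finset.mem_erase] at hS ⊢
    refine ⟨fun y hy => ⟨Finset.mem_univ y, ?_⟩, ?_⟩
    · rintro (rfl | hyB)
      · exact hy.1 rfl
      · exact Finset.disjoint_left.1 hS.2 hyB hy.2
    · rw [Finset.card_erase_of_mem hS.1.2, hS.1.1]
  · intro T hT
    simp only [Finset.coe_filter, mem_kstar, Finset.mem_coe, Finset.mem_powersetCard,
      Finset.subset_iff, Finset.mem_sdiff, Finset.mem_insert] at hT ⊢
    have hxT : x ∉ T := fun h => (hT.1 h).2 (Or.inl rfl)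
    refine ⟨⟨?_, Finset.mem_insert_self x T⟩, ?_⟩
    · rw [Finset.card_insert_of_notMem hxT, hT.2]; omega
    · rw [Finset.disjoint_insert_right]
      exact ⟨hxB, Finset.disjoint_left.2 fun y hyB hyT => (hT.1 hyT).2 (Or.inr hyB)⟩
  · intro S hS
    exact Finset.insert_erase (mem_kstar.1 (Finset.mem_filter.1 hS).1).2
  · intro T hT
    simp only [Finset.mem_coe, Finset.mem_powersetCard] at hT
    exact Finset.erase_insert fun h =>
      (Finset.mem_sdiff.1 (hT.1 h)).2 (Finset.mem_insert_self x B)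

lemma card_kstar (hr : 1 ≤ r) (x : Fin n) : #(kstar n r x) = (n - 1).choose (r - 1) := by
  simpa using card_filter_disjoint_kstar hr (Finset.notMem_empty x)

open Classical in
def starPlusOneFamilies (n r : ℕ) : Finset (Finset (Finset (Fin n))) :=
  Finset.univ.filter fun A => isRFamily n r A ∧ #A = (n - 1).choose (r - 1) + 1 ∧
    maxDeg n A = (n - 1).choose (r - 1)

open Classical in
lemma Ycount_eq_card_filter_starPlusOneFamilies (ω : Sym2 (Finset (Fin n)) → Bool) :
    Ycount n r ω = #((starPlusOneFamilies n r).filter (inducesIndep n ω)) := by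
  simp only [Ycount, starPlusOneFamilies, Finset.filter_filter, and_assoc]

lemma exists_eq_insert_kstar_of_mem_starPlusOneFamilies (hn : 0 < n) (hr : 1 ≤ r)
    {A : Finset (Finset (Fin n))} (hA : A ∈ starPlusOneFamilies n r) :
    ∃ x B, x ∉ B ∧ #B = r ∧ A = insert B (kstar n r x) := by
  classical
  obtain ⟨hAr, hAcard, hAdeg⟩ := (Finset.mem_filter.1 hA).2
  have : Nonempty (Fin n) := ⟨⟨0, hn⟩⟩
  obtain ⟨x, -, hx⟩ := Finset.exists_mem_eq_sup Finset.univ Finset.univ_nonempty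
    fun x : Fin n => #(subAt n A x)
  rw [← maxDeg, hAdeg] at hx
  have hstar : subAt n A x = kstar n r x := by
    refine Finset.eq_of_subset_of_card_le (fun S hS => ?_) (by rw [card_kstar hr, ← hx])
    obtain ⟨hSA, hxS⟩ := Finset.mem_filter.1 hS
    exact mem_kstar.2 ⟨hAr S hSA, hxS⟩
  have hsub : kstar n r x ⊆ A := hstar ▸ Finset.filter_subset _ A
  obtain ⟨B, hB⟩ : ∃ B, A \ kstar n r x = {B} := Finset.card_eq_one.1 (by
    rw [Finset.card_sdiff_of_subset hsub, card_kstar hr, hAcard]; omega)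
  obtain ⟨hBA, hBx⟩ := Finset.mem_sdiff.1 (hB ▸ Finset.mem_singleton_self B)
  refine ⟨x, B, fun hxB => hBx (mem_kstar.2 ⟨hAr B hBA, hxB⟩), hAr B hBA, ?_⟩
  rw [← Finset.sdiff_union_of_subset hsub, hB, Finset.insert_eq]

lemma card_starPlusOneFamilies_le (hn : 0 < n) (hr : 1 ≤ r) :
    #(starPlusOneFamilies n r) ≤ n * n.choose r := by
  classical
  calc #(starPlusOneFamilies n r)
      ≤ #((Finset.univ ×ˢ Finset.univ.powersetCard r).image
          fun q : Fin n × Finset (Fin n) => insert q.2 (kstar n r q.1)) := by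
        refine Finset.card_le_card fun A hA => ?_
        obtain ⟨x, B, -, hB, rfl⟩ := exists_eq_insert_kstar_of_mem_starPlusOneFamilies hn hr hA
        exact Finset.mem_image.2 ⟨(x, B), by simp [hB], rfl⟩
    _ ≤ n * n.choose r := Finset.card_image_le.trans (by simp)

lemma choose_le_eCount_insert_kstar (hr : 1 ≤ r) {x : Fin n} {B : Finset (Fin n)}
    (hxB : x ∉ B) (hB : #B = r) :
    (n - r - 1).choose (r - 1) ≤ eCount n (insert B (kstar n r x)) := by
  calc (n - r - 1).choose (r - 1) = #((kstar n r x).filter (Disjoint B)) := by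
        rw [card_filter_disjoint_kstar hr hxB, hB]
    _ = #(((kstar n r x).filter (Disjoint B)).image fun S => s(B, S)) :=
        (Finset.card_image_of_injective _ fun S S' h => Sym2.congr_right.1 h).symm
    _ ≤ eCount n (insert B (kstar n r x)) := by
        rw [eCount_eq_card_kneserEdges]
        refine Finset.card_le_card (Finset.image_subset_iff.2 fun S hS => ?_)
        obtain ⟨hSx, hBS⟩ := Finset.mem_filter.1 hS
        refine mk_mem_kneserEdges.2 ⟨Finset.mem_insert_self _ _, Finset.mem_insert_of_mem hSx,
          ?_, hBS⟩
        rintro rfl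
        exact hxB (mem_kstar.1 hSx).2

lemma bexpect_Ycount_le (hn : 0 < n) (hr : 1 ≤ r) {p : ℝ} (hp0 : 0 ≤ p) (hp1 : p ≤ 1) :
    bexpect p (fun ω => (Ycount n r ω : ℝ)) ≤
      n * n.choose r * (1 - p) ^ (n - r - 1).choose (r - 1) := by
  simp_rw [Ycount_eq_card_filter_starPlusOneFamilies, bexpect_card_filter, bprob_inducesIndep]
  calc ∑ A ∈ starPlusOneFamilies n r, (1 - p) ^ eCount n A
      ≤ ∑ A ∈ starPlusOneFamilies n r, (1 - p) ^ (n - r - 1).choose (r - 1) := by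
        refine Finset.sum_le_sum fun A hA => ?_
        obtain ⟨x, B, hxB, hB, rfl⟩ :=
          exists_eq_insert_kstar_of_mem_starPlusOneFamilies hn hr hA
        exact pow_le_pow_of_le_one (by linarith) (by linarith)
          (choose_le_eCount_insert_kstar hr hxB hB)
    _ ≤ n * n.choose r * (1 - p) ^ (n - r - 1).choose (r - 1) := by
        rw [Finset.sum_const, nsmul_eq_mul]
        gcongr
        exact_mod_cast card_starPlusOneFamilies_le hn hr

end Star

section Binomial

lemma self_le_choose {m k : ℕ} (hk : 1 ≤ k) (h : 2 * k ≤ m) : m ≤ m.choose k := by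
  induction k, hk using Nat.le_induction with
  | base => simp
  | succ k _ ih =>
    exact (ih (by omega)).trans (Nat.choose_le_succ_of_lt_half_left (by omega))

lemma choose_le_exp_one_mul_div_pow (n r : ℕ) : (n.choose r : ℝ) ≤ (exp 1 * n / r) ^ r := by
  rcases Nat.eq_zero_or_pos r with rfl | hr
  · simp
  have hr' : (0 : ℝ) < r := by exact_mod_cast hr
  calc (n.choose r : ℝ) ≤ (n : ℝ) ^ r / r.factorial := Nat.choose_le_pow_div r n
    _ = (n / r : ℝ) ^ r * ((r : ℝ) ^ r / r.factorial) := by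
        rw [← mul_div_assoc, div_pow, div_mul_cancel₀ _ (by positivity)]
    _ ≤ (n / r : ℝ) ^ r * exp r := by
        gcongr
        exact pow_div_factorial_le_exp _ hr'.le r
    _ = (exp 1 * n / r) ^ r := by
        rw [← exp_one_pow, ← mul_pow, mul_div_assoc, mul_comm]

lemma choose_mul_pow_le_choose_mul_pow {m k : ℕ} (hm : 0 < m) (h : 2 * k ≤ m) :
    m.choose k * (m - 2 * k) ^ k ≤ (m - k - 1).choose k * m ^ k := by
  have hlow : (m - 2 * k) ^ k ≤ k.factorial * (m - k - 1).choose k := by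
    rw [← Nat.descFactorial_eq_factorial_mul_choose]
    simpa [show m - k - 1 + 1 - k = m - 2 * k by omega] using
      Nat.pow_sub_le_descFactorial (m - k - 1) k
  have hup : k.factorial * m.choose k ≤ m ^ k := by
    rw [← Nat.descFactorial_eq_factorial_mul_choose]
    exact Nat.descFactorial_le_pow m k
  calc m.choose k * (m - 2 * k) ^ k ≤ m.choose k * (k.factorial * (m - k - 1).choose k) :=
        Nat.mul_le_mul_left _ hlow
    _ = (m - k - 1).choose k * (k.factorial * m.choose k) := by ring
    _ ≤ (m - k - 1).choose k * m ^ k := Nat.mul_le_mul_left _ hup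

lemma one_sub_mul_choose_le_choose {m k : ℕ} (hm : 0 < m) (h : 2 * k ≤ m) :
    (1 - 2 * (k : ℝ) ^ 2 / m) * m.choose k ≤ (m - k - 1).choose k := by
  have hm' : (0 : ℝ) < m := by exact_mod_cast hm
  have h' : 2 * (k : ℝ) ≤ m := by exact_mod_cast h
  have hbern : 1 - 2 * (k : ℝ) ^ 2 / m ≤ ((m - 2 * k) / m : ℝ) ^ k := by
    refine le_of_eq_of_le ?_ (one_add_mul_sub_le_pow (a := ((m - 2 * k) / m : ℝ)) ?_ k)
    · field_simp
      ring
    · have : (0 : ℝ) ≤ (m - 2 * k) / m := div_nonneg (by linarith) hm'.le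
      linarith
  have hnat : (m.choose k * (m - 2 * k) ^ k : ℝ) ≤ (m - k - 1).choose k * (m : ℝ) ^ k := by
    have := choose_mul_pow_le_choose_mul_pow hm h
    rw [← Nat.cast_le (α := ℝ)] at this
    push_cast [h] at this
    exact this
  calc (1 - 2 * (k : ℝ) ^ 2 / m) * m.choose k ≤ ((m - 2 * k) / m : ℝ) ^ k * m.choose k := by
        gcongr
    _ ≤ (m - k - 1).choose k := by
        rw [div_pow, div_mul_eq_mul_div, div_le_iff₀ (by positivity)]
        linarith

end Binomial

section Threshold

variable {n r : ℕ}

lemma mul_log_le_add_one_mul_log (h : r ≤ n) : (r : ℝ) * log r ≤ ((r : ℝ) + 1) * log n := by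
  have hlog : (r : ℝ) * log r ≤ r * log n := by
    rcases Nat.eq_zero_or_pos r with rfl | hr
    · simp
    · gcongr
  nlinarith [log_natCast_nonneg n]

lemma pc_nonneg (h : r ≤ n) : 0 ≤ pc n r :=
  div_nonneg (sub_nonneg.2 (mul_log_le_add_one_mul_log h)) (Nat.cast_nonneg _)

lemma pc_le (hr : 2 ≤ r) (h : 2 * r ≤ n) : pc n r ≤ ((r : ℝ) + 1) * log n / (n - 1) := by
  have hC : (n : ℝ) - 1 ≤ (n - 1).choose (r - 1) := by
    have := self_le_choose (m := n - 1) (k := r - 1) (by omega) (by omega)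
    rw [← Nat.cast_le (α := ℝ)] at this
    push_cast [show 1 ≤ n by omega] at this
    exact this
  have hn : (0 : ℝ) < n - 1 := by
    have : (2 : ℝ) ≤ n := by exact_mod_cast (show 2 ≤ n by omega)
    linarith
  calc pc n r ≤ (((r : ℝ) + 1) * log n) / ((n - 1).choose (r - 1)) := by
        unfold pc
        gcongr
        have := log_natCast_nonneg r
        have := (Nat.cast_nonneg r : (0 : ℝ) ≤ r)
        nlinarith
    _ ≤ ((r : ℝ) + 1) * log n / (n - 1) := by gcongr

lemma natCast_mul_choose_le_exp (hn : 0 < n) :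
    (n * n.choose r : ℝ) ≤ exp (((r : ℝ) + 1) * log n - r * log r + r) := by
  rcases Nat.eq_zero_or_pos r with rfl | hr
  · simp [exp_log (Nat.cast_pos.2 hn)]
  have hn' : (0 : ℝ) < n := by exact_mod_cast hn
  have hr' : (0 : ℝ) < r := by exact_mod_cast hr
  calc (n * n.choose r : ℝ) ≤ n * (exp 1 * n / r) ^ r := by
        gcongr
        exact choose_le_exp_one_mul_div_pow n r
    _ = exp (((r : ℝ) + 1) * log n - r * log r + r) := by
        rw [← exp_log (show 0 < exp 1 * n / r by positivity), ← exp_nat_mul, log_div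
          (by positivity) hr'.ne', log_mul (exp_pos 1).ne' hn'.ne', log_exp]
        nth_rewrite 1 [← exp_log hn']
        rw [← exp_add]
        ring_nf

end Threshold

section Estimate

variable {n r : ℕ} {ε : ℝ}

lemma one_add_half_mul_le_pc_mul_choose (hε0 : 0 < ε) (hε1 : ε ≤ 1) (hr : 2 ≤ r)
    (hrn : 8 * (r : ℝ) ^ 2 ≤ ε * n) :
    (1 + ε / 2) * (((r : ℝ) + 1) * log n - r * log r) ≤
      (1 + ε) * pc n r * (n - r - 1).choose (r - 1) := by
  have hr' : (2 : ℝ) ≤ r := by exact_mod_cast hr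
  have h2r : 2 * r ≤ n := by
    have : (2 * r : ℝ) ≤ n := by nlinarith
    exact_mod_cast this
  have hn1 : ((n - 1 : ℕ) : ℝ) = n - 1 := by push_cast [show 1 ≤ n by omega]; ring
  have hr1 : ((r - 1 : ℕ) : ℝ) = r - 1 := by push_cast [show 1 ≤ r by omega]; ring
  set C : ℝ := (Nat.choose (n - 1) (r - 1) : ℝ)
  set N : ℝ := ((r : ℝ) + 1) * log n - r * log r
  have hC : 0 < C := Nat.cast_pos.2 (Nat.choose_pos (by omega))
  have hpc : pc n r = N / C := rfl
  have hN : 0 ≤ N := sub_nonneg.2 (mul_log_le_add_one_mul_log (by omega))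
  have hm : (1 - ε / 4) * C ≤ (n - r - 1).choose (r - 1) := by
    have := one_sub_mul_choose_le_choose (m := n - 1) (k := r - 1) (by omega) (by omega)
    rw [show n - 1 - (r - 1) - 1 = n - r - 1 by omega, hn1, hr1] at this
    refine le_trans (mul_le_mul_of_nonneg_right ?_ hC.le) this
    have hn : (0 : ℝ) < n - 1 := by
      have : (2 : ℝ) ≤ n := by exact_mod_cast (show 2 ≤ n by omega)
      linarith
    rw [sub_le_sub_iff_left, div_le_iff₀ hn]
    nlinarith
  calc (1 + ε / 2) * N ≤ (1 + ε) * N * (1 - ε / 4) := by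
        nlinarith [mul_nonneg (mul_nonneg hN hε0.le) (sub_nonneg.2 hε1)]
    _ = (1 + ε) * (N / C) * ((1 - ε / 4) * C) := by field_simp
    _ ≤ (1 + ε) * pc n r * (n - r - 1).choose (r - 1) := by
        rw [hpc]
        gcongr

lemma one_sub_pow_le_exp_neg_mul {p : ℝ} (hp : p ≤ 1) (m : ℕ) :
    (1 - p) ^ m ≤ exp (-(p * m)) :=
  calc (1 - p) ^ m ≤ exp (-p) ^ m := pow_le_pow_left₀ (by linarith) (one_sub_le_exp_neg p) m
    _ = exp (-(p * m)) := by rw [← exp_nat_mul]; ring_nf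

lemma bexpect_Ycount_mem_Icc (hε0 : 0 < ε) (hε1 : ε ≤ 1) (hr : 2 ≤ r)
    (hrn : 8 * (r : ℝ) ^ 2 ≤ ε * n) (hεn : 4 ≤ ε * log n)
    (hpn : (1 + ε) * ((r : ℝ) + 1) * log n ≤ n - 1) :
    bexpect ((1 + ε) * pc n r) (fun ω => (Ycount n r ω : ℝ)) ∈
      Set.Icc 0 ((n : ℝ) ^ (-(ε / 2))) := by
  have hr' : (2 : ℝ) ≤ r := by exact_mod_cast hr
  have hrn' : (r : ℝ) ^ 2 ≤ n := by nlinarith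
  have h2r : 2 * r ≤ n := by
    have : (2 * r : ℝ) ≤ n := by nlinarith
    exact_mod_cast this
  have hn : (0 : ℝ) < n := by nlinarith
  set p := (1 + ε) * pc n r
  have hp0 : 0 ≤ p := mul_nonneg (by linarith) (pc_nonneg (by omega))
  have hp1 : p ≤ 1 :=
    calc p ≤ (1 + ε) * (((r : ℝ) + 1) * log n / (n - 1)) :=
          mul_le_mul_of_nonneg_left (pc_le hr h2r) (by linarith)
      _ ≤ 1 := by
        rw [← mul_div_assoc, div_le_one (by nlinarith)]
        linarith
  refine ⟨bexpect_nonneg hp0 hp1 fun _ => Nat.cast_nonneg _, ?_⟩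
  have hlogr : 2 * log r ≤ log n := by
    have := log_le_log (by positivity) hrn'
    rwa [log_pow, Nat.cast_ofNat] at this
  set N := ((r : ℝ) + 1) * log n - r * log r
  set m := (n - r - 1).choose (r - 1)
  have hpm : (1 + ε / 2) * N ≤ p * m := one_add_half_mul_le_pc_mul_choose hε0 hε1 hr hrn
  calc bexpect p (fun ω => (Ycount n r ω : ℝ)) ≤ n * n.choose r * (1 - p) ^ m :=
        bexpect_Ycount_le (by omega) (by omega) hp0 hp1
    _ ≤ exp (N + r) * exp (-(p * m)) :=
        mul_le_mul (natCast_mul_choose_le_exp (by omega)) (one_sub_pow_le_exp_neg_mul hp1 m)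
          (pow_nonneg (by linarith) m) (exp_pos _).le
    _ = exp (N + r - p * m) := by rw [← exp_add]; ring_nf
    _ ≤ exp (log n * (-(ε / 2))) := by
        gcongr
        nlinarith [mul_le_mul_of_nonneg_left hlogr hε0.le]
    _ = (n : ℝ) ^ (-(ε / 2)) := (rpow_def_of_pos hn _).symm

end Estimate

lemma isLittleO_mul_of_isLittleO_sqrt {f g : ℕ → ℝ}
    (hf : f =o[atTop] fun n : ℕ => (n : ℝ) ^ ((1 : ℝ) / 2))
    (hg : g =o[atTop] fun n : ℕ => (n : ℝ) ^ ((1 : ℝ) / 2)) :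
    (fun n => f n * g n) =o[atTop] fun n : ℕ => (n : ℝ) := by
  refine (hf.mul hg).congr_right fun n => ?_
  rw [← rpow_add' (Nat.cast_nonneg n) (by norm_num)]
  norm_num

lemma eventually_le_mul_of_isLittleO {f : ℕ → ℝ} (h : f =o[atTop] fun n : ℕ => (n : ℝ))
    {c : ℝ} (hc : 0 < c) : ∀ᶠ n in atTop, f n ≤ c * n :=
  (h.bound hc).mono fun n hn => by simpa using (le_abs_self _).trans hn

/-- for `ε ∈ (0, 1/2)`, `2 ≤ r(n) = o(n^{1/2})` and
`p(n) = (1+ε) p_c(n, r(n))`, the expectation `E[Y_n]` tends to `0`. -/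
theorem expect_Ycount_tendsto_zero (ε : ℝ) (hε : ε ∈ Set.Ioo (0 : ℝ) (1 / 2))
    (r : ℕ → ℕ) (hr : ∀ n, 2 ≤ r n)
    (hro : (fun n => (r n : ℝ)) =o[atTop] fun n : ℕ => (n : ℝ) ^ ((1 : ℝ) / 2)) :
    Tendsto
      (fun n => bexpect ((1 + ε) * pc n (r n))
        (fun ω : Sym2 (Finset (Fin n)) → Bool => (Ycount n (r n) ω : ℝ)))
      atTop (nhds 0) := by
  obtain ⟨hε0, hε2⟩ := hε
  have hlog : (fun n : ℕ => log n) =o[atTop] fun n : ℕ => (n : ℝ) ^ ((1 : ℝ) / 2) :=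
    (isLittleO_log_rpow_atTop (by norm_num)).comp_tendsto tendsto_natCast_atTop_atTop
  have hbound : ∀ᶠ n : ℕ in atTop,
      bexpect ((1 + ε) * pc n (r n)) (fun ω => (Ycount n (r n) ω : ℝ)) ∈
        Set.Icc 0 ((n : ℝ) ^ (-(ε / 2))) := by
    filter_upwards [eventually_le_mul_of_isLittleO (isLittleO_mul_of_isLittleO_sqrt hro hro)
        (c := ε / 8) (by positivity),
      eventually_le_mul_of_isLittleO (isLittleO_mul_of_isLittleO_sqrt hro hlog)
        (c := 1 / 6) (by norm_num),
      (tendsto_log_atTop.comp tendsto_natCast_atTop_atTop).eventually_ge_atTop (4 / ε),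
      eventually_ge_atTop 2] with n hrsq hrlog hlogn hn
    have hr' : (2 : ℝ) ≤ r n := by exact_mod_cast hr n
    have hn' : (2 : ℝ) ≤ n := by exact_mod_cast hn
    have hL := log_natCast_nonneg n
    refine bexpect_Ycount_mem_Icc hε0 (by linarith) (hr n) (by nlinarith) ?_ ?_
    · rwa [Function.comp_apply, div_le_iff₀ hε0, mul_comm] at hlogn
    · nlinarith [mul_nonneg (sub_nonneg.2 hr') hL, mul_nonneg hε0.le hL]
  exact tendsto_of_tendsto_of_tendsto_of_le_of_le' tendsto_const_nhds
    ((tendsto_rpow_neg_atTop (by positivity)).comp tendsto_natCast_atTop_atTop)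
    (hbound.mono fun n h => h.1) (hbound.mono fun n h => h.2)

end
end

section
/- Let n ≥ r ≥ 1, write N = binom(n−1, r−1), and let A ⊆ [n]^(r) with |A| = N and (r+4)·d(A) < N. Then e(A) ≥ 2N²/(r+4). -/
open Finset Filter Real Asymptotics

noncomputable section

/-! A member `S` of `A` meets only members of the stars at its `r` points, hence at most
`r * d(A)` members of `A`, and is disjoint from all the others: at least `N - r * d(A)`, which is
more than `4N/(r+4)` when `(r+4) d(A) < N`. Summing over `S` counts each disjoint pair twice,
so `2 e(A) ≥ N · 4N/(r+4)`. -/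

namespace Sym2

variable {α : Type*} [DecidableEq α]

theorem two_mul_card_image_of_swap_mem {P : Finset (α × α)} (hswap : ∀ p ∈ P, p.swap ∈ P)
    (hdiag : ∀ p ∈ P, p.1 ≠ p.2) : 2 * #(P.image Sym2.mk.uncurry) = #P := by
  rw [card_eq_sum_card_image (Sym2.mk.uncurry : α × α → _), mul_comm]
  refine (sum_const_nat fun e he => ?_).symm
  obtain ⟨⟨a, b⟩, hab, rfl⟩ := mem_image.1 he
  have hfiber : {z ∈ P | Sym2.mk.uncurry z = s(a, b)} = {(a, b), (b, a)} := by
    ext ⟨x, y⟩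
    simp only [mem_filter, Function.uncurry_apply_pair, Sym2.eq_iff, mem_insert, mem_singleton,
      Prod.mk.injEq]
    constructor
    · exact fun h => h.2
    · rintro (⟨rfl, rfl⟩ | ⟨rfl, rfl⟩)
      · exact ⟨hab, .inl ⟨rfl, rfl⟩⟩
      · exact ⟨hswap _ hab, .inr ⟨rfl, rfl⟩⟩
  rw [show Sym2.mk.uncurry (a, b) = s(a, b) from rfl, hfiber, card_pair]
  simpa [Prod.ext_iff] using fun h _ => hdiag _ hab h

end Sym2

theorem Finset.ne_of_disjoint_of_mem {α : Type*} {A : Finset (Finset α)} (hA : ∅ ∉ A)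
    {S T : Finset α} (hS : S ∈ A) (hST : Disjoint S T) : S ≠ T :=
  hST.ne (ne_of_mem_of_not_mem hS hA)

variable {n : ℕ}

theorem card_filter_not_disjoint_le_card_mul_maxDeg (A : Finset (Finset (Fin n)))
    (S : Finset (Fin n)) : #{T ∈ A | ¬Disjoint S T} ≤ #S * maxDeg n A :=
  calc #{T ∈ A | ¬Disjoint S T}
      ≤ #(S.biUnion (subAt n A)) := card_le_card fun T hT => by
        obtain ⟨hTA, hST⟩ := mem_filter.1 hT
        obtain ⟨x, hxS, hxT⟩ := not_disjoint_iff.1 hST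
        exact mem_biUnion.2 ⟨x, hxS, mem_filter.2 ⟨hTA, hxT⟩⟩
    _ ≤ ∑ x ∈ S, #(subAt n A x) := card_biUnion_le
    _ ≤ ∑ _x ∈ S, maxDeg n A :=
        sum_le_sum fun x _ => le_sup (f := fun x => #(subAt n A x)) (mem_univ x)
    _ = #S * maxDeg n A := by rw [sum_const, smul_eq_mul]

theorem eCount_eq_card_image {A : Finset (Finset (Fin n))} (hA : ∅ ∉ A) :
    eCount n A = #({p ∈ A ×ˢ A | Disjoint p.1 p.2}.image Sym2.mk.uncurry) := by
  classical
  rw [eCount]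
  congr 1
  ext e
  induction e using Sym2.ind with
  | _ S T =>
    simp only [mem_filter, mk_mem_sym2_iff, Sym2.mk_isDiag_iff, mem_image, mem_product,
      Prod.exists, Function.uncurry_apply_pair, Sym2.eq_iff, Sym2.mem_iff, forall_eq_or_imp,
      forall_eq]
    grind [ne_of_disjoint_of_mem hA]

theorem two_mul_eCount {A : Finset (Finset (Fin n))} (hA : ∅ ∉ A) :
    2 * eCount n A = #{p ∈ A ×ˢ A | Disjoint p.1 p.2} := by
  rw [eCount_eq_card_image hA]
  refine Sym2.two_mul_card_image_of_swap_mem (fun p hp => ?_) (fun p hp => ?_)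
  · simp only [mem_filter, mem_product] at hp ⊢
    exact ⟨hp.1.symm, hp.2.symm⟩
  · obtain ⟨hpA, hdisj⟩ := mem_filter.1 hp
    exact ne_of_disjoint_of_mem hA (mem_product.1 hpA).1 hdisj

theorem card_mul_card_le_two_mul_eCount_add {r : ℕ} (hr : 1 ≤ r) {A : Finset (Finset (Fin n))}
    (hA : isRFamily n r A) : #A * #A ≤ 2 * eCount n A + #A * (r * maxDeg n A) := by
  have hempty : ∅ ∉ A := fun h => by simpa using hr.trans_eq (hA ∅ h).symm
  calc #A * #A = ∑ S ∈ A, (#{T ∈ A | Disjoint S T} + #{T ∈ A | ¬Disjoint S T}) := by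
        simp only [card_filter_add_card_filter_not, sum_const, smul_eq_mul]
    _ ≤ ∑ S ∈ A, (#{T ∈ A | Disjoint S T} + r * maxDeg n A) := by
        gcongr with S hS
        exact hA S hS ▸ card_filter_not_disjoint_le_card_mul_maxDeg A S
    _ = 2 * eCount n A + #A * (r * maxDeg n A) := by
        rw [sum_add_distrib, two_mul_eCount hempty, sum_const, smul_eq_mul, card_filter,
          sum_product]
        simp only [card_filter]

theorem eCount_ge_of_small_maxDeg_general (n r : ℕ) (hr : 1 ≤ r)
    (A : Finset (Finset (Fin n))) (hA : isRFamily n r A)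
    (hcard : A.card = (n - 1).choose (r - 1))
    (hdeg : (r + 4) * maxDeg n A < (n - 1).choose (r - 1)) :
    2 * ((n - 1).choose (r - 1) : ℝ) ^ 2 / ((r : ℝ) + 4) ≤ (eCount n A : ℝ) := by
  set N := (n - 1).choose (r - 1)
  have hcount : (N : ℝ) * N ≤ 2 * eCount n A + N * (r * maxDeg n A) := by
    exact_mod_cast hcard ▸ card_mul_card_le_two_mul_eCount_add hr hA
  have hdeg' : ((r : ℝ) + 4) * maxDeg n A < N := by exact_mod_cast hdeg
  rw [div_le_iff₀ (by positivity)]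
  nlinarith [mul_le_mul_of_nonneg_left hdeg'.le (by positivity : (0 : ℝ) ≤ r * N)]

/-- edge bound for families of small maximum degree: if
`|A| = N = C(n-1, r-1)` and `(r+4) d(A) < N`, then `e(A) ≥ 2N²/(r+4)`. -/
theorem eCount_ge_of_small_maxDeg (n r : ℕ) (hr : 1 ≤ r) (hrn : r ≤ n)
    (A : Finset (Finset (Fin n))) (hA : isRFamily n r A)
    (hcard : A.card = (n - 1).choose (r - 1))
    (hdeg : (r + 4) * maxDeg n A < (n - 1).choose (r - 1)) :
    2 * ((n - 1).choose (r - 1) : ℝ) ^ 2 / ((r : ℝ) + 4) ≤ (eCount n A : ℝ) :=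
  eCount_ge_of_small_maxDeg_general n r hr A hA hcard hdeg

end
end

section
/- For every ε ∈ (0, 1/2) there exists n₀ such that for all n ≥ n₀, all integers r with 2 ≤ r ≤ log n, and all real α with (log n)^{-2} ≤ α ≤ (1 − ε/2)/(r+1), one has (r/(α·n)) · (n^{r+1}/r^r)^{α/2} < 1. -/
open Finset Filter Real Asymptotics

noncomputable section

/-!
Take logarithms and write `L = log n`. Since `α (r + 1) ≤ 1` and `r log r ≥ 0`, the exponent
contributes at most `L / 2`; the prefactor contributes `log r - log α - L ≤ 3 log L - L`, because
`r ≤ L` and `α ≥ L⁻²`. Hence the logarithm is at most `3 log L - L / 2`, which is negative once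
`L ≥ 144`.
-/

theorem three_mul_log_lt_half_self {L : ℝ} (hL : 144 ≤ L) : 3 * log L < L / 2 := by
  have hL0 : 0 < L := by linarith
  have hsqrt : 12 ≤ √L := le_sqrt_of_sq_le (by linarith)
  -- `log √L ≤ √L - 1`
  have hlog : log L ≤ 2 * √L - 2 := by
    have := log_le_sub_one_of_pos (sqrt_pos.mpr hL0)
    rw [log_sqrt hL0.le] at this
    linarith
  nlinarith [sq_sqrt hL0.le]

theorem log_prefactor_mul_rpow_le {n α : ℝ} {r : ℕ} (hn : 1 < n) (hr : 1 ≤ r)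
    (hrL : (r : ℝ) ≤ log n) (hα : (log n ^ 2)⁻¹ ≤ α) (hαr : α * ((r : ℝ) + 1) ≤ 1) :
    log ((r / (α * n)) * (n ^ (r + 1) / (r : ℝ) ^ r) ^ (α / 2))
      ≤ 3 * log (log n) - log n / 2 := by
  set L := log n
  have hn0 : 0 < n := by linarith
  have hL0 : 0 < L := log_pos hn
  have hr1 : (1 : ℝ) ≤ r := by exact_mod_cast hr
  have hr0 : (0 : ℝ) < r := by linarith
  have hα0 : 0 < α := lt_of_lt_of_le (by positivity) hα
  have hlog_r : log r ≤ log L := log_le_log hr0 hrL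
  have hlog_α : -(2 * log L) ≤ log α := by
    have := log_le_log (by positivity) hα
    rw [log_inv, log_pow] at this
    push_cast at this
    linarith
  have hexponent : α / 2 * (((r : ℝ) + 1) * L - r * log r) ≤ L / 2 := by
    have : 0 ≤ α * (r * log r) := by have := log_nonneg hr1; positivity
    nlinarith [mul_le_mul_of_nonneg_right hαr hL0.le]
  calc log ((r / (α * n)) * (n ^ (r + 1) / (r : ℝ) ^ r) ^ (α / 2))
      = log r - (log α + L) + α / 2 * (((r : ℝ) + 1) * L - r * log r) := by
        rw [log_mul (by positivity) (by positivity), log_rpow (by positivity),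
          log_div (by positivity) (by positivity), log_div (by positivity) (by positivity),
          log_mul hα0.ne' hn0.ne', log_pow, log_pow]
        push_cast
        ring
    _ ≤ 3 * log L - L / 2 := by linarith

/-- analytic inequality used in Lemma 8: for `ε ∈ (0, 1/2)`, all large `n`,
all `2 ≤ r ≤ log n`, and all `α` with `(log n)⁻² ≤ α ≤ (1 - ε/2)/(r+1)`, one has
`(r/(αn)) (n^{r+1}/r^r)^{α/2} < 1`. -/
theorem analytic_inequality (ε : ℝ) (hε : ε ∈ Set.Ioo (0 : ℝ) (1 / 2)) :
    ∃ n₀ : ℕ, ∀ n : ℕ, n₀ ≤ n → ∀ r : ℕ, 2 ≤ r → (r : ℝ) ≤ Real.log n →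
      ∀ α : ℝ, ((Real.log n) ^ 2)⁻¹ ≤ α → α ≤ (1 - ε / 2) / ((r : ℝ) + 1) →
        ((r : ℝ) / (α * n)) * (((n : ℝ) ^ (r + 1) / (r : ℝ) ^ r) ^ (α / 2)) < 1 := by
  refine ⟨⌈exp 144⌉₊, fun n hn r hr hrL α hα hαε => ?_⟩
  have hexp : exp 144 ≤ n := (Nat.le_ceil _).trans (by exact_mod_cast hn)
  have hL : 144 ≤ log n := (le_log_iff_exp_le ((exp_pos _).trans_le hexp)).mpr hexp
  have hn1 : (1 : ℝ) < n := (one_lt_exp_iff.mpr (by norm_num)).trans_le hexp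
  have hα0 : 0 < α := lt_of_lt_of_le (by positivity) hα
  have hαr : α * ((r : ℝ) + 1) ≤ 1 := by
    rw [le_div_iff₀ (by positivity)] at hαε
    linarith [hε.1]
  rw [← log_neg_iff (by positivity)]
  linarith [log_prefactor_mul_rpow_le hn1 (by omega) hrL hα hαr, three_mul_log_lt_half_self hL]

end
end
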